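/- If G is a (not necessarily connected) twin-free graph on n vertices with imax(G) = k where k ≥ 2, then n ≤ 2^{k-1} + k - 1. -/

import Mathlib

open SimpleGraph

/-- `s` is an independent set in `G`. -/
def IsIndep {V : Type*} (G : SimpleGraph V) (s : Set V) : Prop :=
  ∀ ⦃u⦄, u ∈ s → ∀ ⦃v⦄, v ∈ s → ¬ G.Adj u v

/-- `s` is a maximal independent set in `G`. -/
def IsMaxIndep {V : Type*} (G : SimpleGraph V) (s : Set V) : Prop :=
  IsIndep G s ∧ ∀ t : Set V, IsIndep G t → s ⊆ t → s = t

/-- The number of maximal independent sets of `G`. -/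
noncomputable def imax {V : Type*} (G : SimpleGraph V) : ℕ :=
  Set.ncard {s : Set V | IsMaxIndep G s}

/-- `G` is twin-free: no two distinct vertices have the same open neighbourhood. -/
def TwinFree {V : Type*} (G : SimpleGraph V) : Prop :=
  ∀ u v : V, G.neighborSet u = G.neighborSet v → u = v

/-!
Let `M` be the family of the `k` maximal independent sets. Twin-freeness makes
`v ↦ {S ∈ M | v ∈ S}` injective, so `n` is the size of a family `𝒜` of subsets of `M`, and
pairing subsets with their complements gives `|𝒜| ≤ 2 ^ (k - 1) + p`, where `p` is the number
of complementary pairs in `𝒜`. Such a pair comes from vertices `u, u'` such that every maximal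
independent set contains exactly one of them. On one vertex from each pair, the traces of the
maximal independent sets form a median-closed family (the majority vote of three maximal
independent sets is independent) in which distinct vertices induce distinct nontrivial splits;
for such a family the all-ones vector and the indicators of the splits are linearly independent,
so `p ≤ k - 1`.
-/

open Finset
open scoped symmDiff

section Splits

variable {α : Type*}

open scoped Classical

def IsMedianClosed (M : Finset (Set α)) : Prop :=
  ∀ S₁ ∈ M, ∀ S₂ ∈ M, ∀ S₃ ∈ M, S₁ ∩ S₂ ∪ S₁ ∩ S₃ ∪ S₂ ∩ S₃ ∈ M

/-- A point `u` induces the split `{S ∈ M | u ∈ S} ∣ {S ∈ M | u ∉ S}` of `M`; distinct points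
must induce different splits. -/
def InducesDistinctSplits (M : Finset (Set α)) : Prop :=
  Pairwise fun u v : α => (∃ S ∈ M, (u ∈ S ↔ v ∈ S)) ∧ ∃ S ∈ M, ¬(u ∈ S ↔ v ∈ S)

theorem filter_mem_symmDiff_median (T : Finset α) (S S' S'' : Set α) :
    {u ∈ T | u ∈ (S ∩ S' ∪ S ∩ S'' ∪ S' ∩ S'') ∆ S} = {u ∈ T | u ∈ S ∆ S' ∧ u ∈ S'' ∆ S} := by
  ext u
  simp only [mem_filter, Set.mem_symmDiff, Set.mem_union, Set.mem_inter_iff]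
  tauto

theorem exists_filter_mem_symmDiff_eq_singleton {M : Finset (Set α)} (hmed : IsMedianClosed M)
    (hsplit : InducesDistinctSplits M) (T : Finset α)
    (hne : ∃ S ∈ M, ∃ S' ∈ M, {u ∈ T | u ∈ S ∆ S'}.Nonempty) :
    ∃ S ∈ M, ∃ S' ∈ M, ∃ w, {u ∈ T | u ∈ S ∆ S'} = {w} := by
  set P := {p ∈ M ×ˢ M | {u ∈ T | u ∈ p.1 ∆ p.2}.Nonempty}
  have hP : P.Nonempty := by
    obtain ⟨S, hS, S', hS', h⟩ := hne
    exact ⟨(S, S'), mem_filter.2 ⟨mem_product.2 ⟨hS, hS'⟩, h⟩⟩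
  obtain ⟨⟨S, S'⟩, hmem, hmin⟩ := exists_min_image P (fun p => #{u ∈ T | u ∈ p.1 ∆ p.2}) hP
  obtain ⟨hSS', hD⟩ := mem_filter.1 hmem
  obtain ⟨hS, hS'⟩ := mem_product.1 hSS'
  set D := {u ∈ T | u ∈ S ∆ S'}
  -- By minimality, a third member `S''` differs from `S` on all of `D` or on none of it:
  -- otherwise the median of `S, S', S''` would differ from `S` on a smaller nonempty set.
  have hrigid : ∀ S'' ∈ M, ∀ u ∈ D, ∀ v ∈ D, (u ∈ S'' ∆ S ↔ v ∈ S'' ∆ S) := by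
    have hall : ∀ S'' ∈ M, ∀ u ∈ D, u ∈ S'' ∆ S → ∀ v ∈ D, v ∈ S'' ∆ S := by
      intro S'' hS'' u hu huS v hv
      set m := S ∩ S' ∪ S ∩ S'' ∪ S' ∩ S''
      have hE : {u ∈ T | u ∈ m ∆ S} = {u ∈ D | u ∈ S'' ∆ S} := by
        rw [filter_mem_symmDiff_median, filter_filter]
      have hmP : (m, S) ∈ P := mem_filter.2 ⟨mem_product.2 ⟨hmed S hS S' hS' S'' hS'', hS⟩,
        hE ▸ ⟨u, mem_filter.2 ⟨hu, huS⟩⟩⟩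
      have hDE : {u ∈ D | u ∈ S'' ∆ S} = D :=
        eq_of_subset_of_card_le (filter_subset _ _) (hE ▸ hmin _ hmP)
      rw [← hDE] at hv
      exact (mem_filter.1 hv).2
    exact fun S'' hS'' u hu v hv => ⟨(hall S'' hS'' u hu · v hv), (hall S'' hS'' v hv · u hu)⟩
  rcases hD.exists_eq_singleton_or_nontrivial with ⟨w, hw⟩ | ⟨i, hi, j, hj, hij⟩
  · exact ⟨S, hS, S', hS', w, hw⟩
  · exfalso
    obtain ⟨⟨S₁, hS₁, h₁⟩, ⟨S₂, hS₂, h₂⟩⟩ := hsplit hij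
    have e₁ := hrigid S₁ hS₁ i hi j hj
    have e₂ := hrigid S₂ hS₂ i hi j hj
    simp only [Set.mem_symmDiff] at e₁ e₂
    grind

/-- The all-ones vector and the indicator vectors of the splits are linearly independent in
`ℚ ^ M`: a minimal vanishing combination would be detected by two members of `M` that differ
at exactly one point of its support. -/
theorem card_add_one_le_card_of_isMedianClosed [Fintype α] {M : Finset (Set α)}
    (hM : M.Nonempty) (hnt : ∀ u, (∃ S ∈ M, u ∈ S) ∧ ∃ S ∈ M, u ∉ S)
    (hmed : IsMedianClosed M) (hsplit : InducesDistinctSplits M) :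
    Fintype.card α + 1 ≤ #M := by
  let χ : Option α → M → ℚ
    | none, _ => 1
    | some u, S => if u ∈ (S : Set α) then 1 else 0
  suffices LinearIndependent ℚ χ by
    simpa [Module.finrank_fintype_fun_eq_card] using this.fintype_card_le_finrank
  refine Fintype.linearIndependent_iff.2 fun c hc => ?_
  have hrow : ∀ S ∈ M,
      c none + ∑ u, c (some u) * (if u ∈ S then 1 else 0) = 0 := by
    intro S hS
    simpa [χ, Fintype.sum_option] using congrFun hc ⟨S, hS⟩
  have hsome : ∀ u, c (some u) = 0 := by
    by_contra! ⟨u, hu⟩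
    obtain ⟨⟨S, hS, huS⟩, ⟨S', hS', huS'⟩⟩ := hnt u
    obtain ⟨S₁, hS₁, S₂, hS₂, w, hw⟩ := exists_filter_mem_symmDiff_eq_singleton hmed hsplit
      {u | c (some u) ≠ 0} ⟨S, hS, S', hS', u, by simp [hu, huS, huS', Set.mem_symmDiff]⟩
    have hsupp : ∀ b, (c (some b) ≠ 0 ∧ b ∈ S₁ ∆ S₂) ↔ b = w := by
      simpa using Finset.ext_iff.1 hw
    have hdiff :
        ∑ u, c (some u) * ((if u ∈ S₁ then 1 else 0) - (if u ∈ S₂ then 1 else 0)) = 0 := by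
      simp only [mul_sub, Finset.sum_sub_distrib]
      linarith [hrow S₁ hS₁, hrow S₂ hS₂]
    rw [Finset.sum_eq_single w] at hdiff
    · obtain ⟨hcw, hw₁₂⟩ := (hsupp w).2 rfl
      rw [Set.mem_symmDiff] at hw₁₂
      rcases hw₁₂ with ⟨h₁, h₂⟩ | ⟨h₂, h₁⟩ <;> simp [h₁, h₂, hcw] at hdiff
    · intro b _ hbw
      by_cases hb : c (some b) = 0
      · simp [hb]
      · have : b ∉ S₁ ∆ S₂ := fun h => hbw ((hsupp b).1 ⟨hb, h⟩)
        have hb₁₂ : b ∈ S₁ ↔ b ∈ S₂ := by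
          rw [Set.mem_symmDiff] at this
          tauto
        simp [hb₁₂]
    · simp
  obtain ⟨S₀, hS₀⟩ := hM
  have hnone : c none = 0 := by simpa [hsome] using hrow S₀ hS₀
  rintro (_ | u)
  exacts [hnone, hsome u]

end Splits

theorem Finset.card_le_two_pow_add_card_filter_sdiff_mem {β : Type*} [DecidableEq β]
    {s : Finset β} {𝒜 : Finset (Finset β)} (h𝒜 : 𝒜 ⊆ s.powerset) {x : β} (hx : x ∈ s) :
    #𝒜 ≤ 2 ^ (#s - 1) + #{A ∈ 𝒜 | x ∉ A ∧ s \ A ∈ 𝒜} := by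
  set 𝒜₀ := {A ∈ 𝒜 | x ∉ A}
  set 𝒞 := {A ∈ 𝒜 | x ∈ A}.image (s \ ·)
  have hsub : ∀ A ∈ 𝒜, A ⊆ s := fun A hA => mem_powerset.1 (h𝒜 hA)
  have h𝒞 : #𝒞 = #{A ∈ 𝒜 | x ∈ A} := card_image_of_injOn fun A hA B hB hAB => by
    simpa [sdiff_sdiff_eq_self (hsub A (mem_filter.1 hA).1),
      sdiff_sdiff_eq_self (hsub B (mem_filter.1 hB).1)] using congrArg (s \ ·) hAB
  have hunion : 𝒜₀ ∪ 𝒞 ⊆ (s.erase x).powerset := by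
    intro A hA
    rw [mem_powerset]
    rcases mem_union.1 hA with hA | hA
    · obtain ⟨hA, hxA⟩ := mem_filter.1 hA
      exact fun a ha => mem_erase.2 ⟨fun h => hxA (h ▸ ha), hsub A hA ha⟩
    · obtain ⟨B, hB, rfl⟩ := mem_image.1 hA
      exact fun a ha => mem_erase.2 ⟨fun h => (mem_sdiff.1 ha).2 (h ▸ (mem_filter.1 hB).2),
        (mem_sdiff.1 ha).1⟩
  have hinter : 𝒜₀ ∩ 𝒞 ⊆ {A ∈ 𝒜 | x ∉ A ∧ s \ A ∈ 𝒜} := by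
    intro A hA
    obtain ⟨hA₀, hA𝒞⟩ := mem_inter.1 hA
    obtain ⟨B, hB, rfl⟩ := mem_image.1 hA𝒞
    obtain ⟨hB, -⟩ := mem_filter.1 hB
    exact mem_filter.2 ⟨(mem_filter.1 hA₀).1, (mem_filter.1 hA₀).2,
      by rwa [sdiff_sdiff_eq_self (hsub B hB)]⟩
  have hsplit : #{A ∈ 𝒜 | x ∈ A} + #𝒜₀ = #𝒜 := card_filter_add_card_filter_not _
  have hcount := card_union_add_card_inter 𝒜₀ 𝒞
  have h₁ := card_le_card hunion
  have h₂ := card_le_card hinter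
  rw [card_powerset, card_erase_of_mem hx] at h₁
  omega

section Graph
variable {V : Type*} (G : SimpleGraph V)

theorem isIndep_median {S₁ S₂ S₃ : Set V} (h₁ : IsIndep G S₁) (h₂ : IsIndep G S₂)
    (h₃ : IsIndep G S₃) : IsIndep G (S₁ ∩ S₂ ∪ S₁ ∩ S₃ ∪ S₂ ∩ S₃) := by
  intro u hu v hv
  have : u ∈ S₁ ∧ v ∈ S₁ ∨ u ∈ S₂ ∧ v ∈ S₂ ∨ u ∈ S₃ ∧ v ∈ S₃ := by
    simp only [Set.mem_union, Set.mem_inter_iff] at hu hv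
    tauto
  rcases this with ⟨hu, hv⟩ | ⟨hu, hv⟩ | ⟨hu, hv⟩
  exacts [h₁ hu hv, h₂ hu hv, h₃ hu hv]

variable [Finite V]

theorem exists_isMaxIndep_superset {s : Set V} (hs : IsIndep G s) :
    ∃ S, IsMaxIndep G S ∧ s ⊆ S := by
  obtain ⟨S, hsS, hS, hmax⟩ := Finite.exists_le_maximal (p := IsIndep G) hs
  exact ⟨S, ⟨hS, fun t ht hSt => hSt.antisymm (hmax ht hSt)⟩, hsS⟩

theorem exists_isMaxIndep_mem_of_not_adj {u v : V} (h : ¬G.Adj u v) :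
    ∃ S, IsMaxIndep G S ∧ u ∈ S ∧ v ∈ S := by
  have hind : IsIndep G {u, v} := by
    rintro a (rfl | rfl) b (rfl | rfl) hab
    exacts [G.loopless.irrefl _ hab, h hab, h hab.symm, G.loopless.irrefl _ hab]
  obtain ⟨S, hS, huvS⟩ := exists_isMaxIndep_superset G hind
  exact ⟨S, hS, huvS (by simp), huvS (by simp)⟩

theorem exists_isMaxIndep_mem (v : V) : ∃ S, IsMaxIndep G S ∧ v ∈ S := by
  obtain ⟨S, hS, hv, -⟩ := exists_isMaxIndep_mem_of_not_adj G (G.loopless.irrefl v)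
  exact ⟨S, hS, hv⟩

variable {G} in
/-- A neighbour `w` of `u` outside `N(v)` would lie in a maximal independent set with `v`
but without `u`. -/
theorem TwinFree.eq_of_forall_isMaxIndep_mem_iff (htf : TwinFree G) {u v : V}
    (h : ∀ S, IsMaxIndep G S → (u ∈ S ↔ v ∈ S)) : u = v := by
  have hsub : ∀ a b : V, (∀ S, IsMaxIndep G S → (b ∈ S → a ∈ S)) →
      G.neighborSet a ⊆ G.neighborSet b := by
    intro a b hab w haw
    by_contra hbw
    obtain ⟨S, hS, hbS, hwS⟩ := exists_isMaxIndep_mem_of_not_adj G hbw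
    exact hS.1 (hab S hS hbS) hwS haw
  exact htf u v ((hsub u v fun S hS => (h S hS).2).antisymm (hsub v u fun S hS => (h S hS).1))

def IsComplementaryPair (u u' : V) : Prop :=
  ∀ S, IsMaxIndep G S → (u ∈ S ↔ u' ∉ S)

/-- If `u ∉ S` is in the minority, its partner `u'` is in the majority, hence in `S`. -/
theorem exists_isMaxIndep_median {S₁ S₂ S₃ : Set V} (h₁ : IsMaxIndep G S₁)
    (h₂ : IsMaxIndep G S₂) (h₃ : IsMaxIndep G S₃) :
    ∃ S, IsMaxIndep G S ∧ ∀ u u', IsComplementaryPair G u u' →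
      (u ∈ S ↔ u ∈ S₁ ∩ S₂ ∪ S₁ ∩ S₃ ∪ S₂ ∩ S₃) := by
  obtain ⟨S, hS, hmedS⟩ := exists_isMaxIndep_superset G (isIndep_median G h₁.1 h₂.1 h₃.1)
  refine ⟨S, hS, fun u u' hu => ⟨fun huS => ?_, (hmedS ·)⟩⟩
  by_contra humed
  have hu'med : u' ∈ S₁ ∩ S₂ ∪ S₁ ∩ S₃ ∪ S₂ ∩ S₃ := by
    have := hu S₁ h₁; have := hu S₂ h₂; have := hu S₃ h₃
    simp only [Set.mem_union, Set.mem_inter_iff] at humed ⊢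
    tauto
  exact (hu S hS).1 huS (hmedS hu'med)

noncomputable def maxIndepSets : Finset (Set V) :=
  (Set.toFinite {S | IsMaxIndep G S}).toFinset

variable {G} in
theorem mem_maxIndepSets {S : Set V} : S ∈ maxIndepSets G ↔ IsMaxIndep G S :=
  Set.Finite.mem_toFinset _

theorem card_maxIndepSets : #(maxIndepSets G) = imax G :=
  (Set.ncard_eq_toFinset_card _ _).symm

end Graph

variable {V : Type*} [Finite V] {G : SimpleGraph V} in
/-- The restrictions to `U` of the maximal independent sets form a median-closed family in which
the points of `U` induce distinct nontrivial splits. -/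
theorem TwinFree.card_add_one_le_imax (htf : TwinFree G) {S₀ : Set V} (hS₀ : IsMaxIndep G S₀)
    (U : Finset V) (hU : ∀ u ∈ U, u ∉ S₀ ∧ ∃ u', IsComplementaryPair G u u') :
    #U + 1 ≤ imax G := by
  classical
  let M : Finset (Set U) := (maxIndepSets G).image (Subtype.val ⁻¹' ·)
  have hM : M.Nonempty := ⟨_, mem_image_of_mem _ (mem_maxIndepSets.2 hS₀)⟩
  have hnt : ∀ u : U, (∃ S ∈ M, u ∈ S) ∧ ∃ S ∈ M, u ∉ S := by
    simp only [M, exists_mem_image, mem_maxIndepSets, Set.mem_preimage]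
    exact fun u => ⟨exists_isMaxIndep_mem G u, ⟨S₀, hS₀, (hU u u.2).1⟩⟩
  have hsplit : InducesDistinctSplits M := by
    intro u v huv
    simp only [M, exists_mem_image, mem_maxIndepSets, Set.mem_preimage]
    refine ⟨⟨S₀, hS₀, iff_of_false (hU u u.2).1 (hU v v.2).1⟩, ?_⟩
    by_contra! h
    exact huv (Subtype.ext (htf.eq_of_forall_isMaxIndep_mem_iff h))
  have hmed : IsMedianClosed M := by
    simp only [IsMedianClosed, M, forall_mem_image, mem_maxIndepSets]
    intro S₁ h₁ S₂ h₂ S₃ h₃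
    obtain ⟨S, hS, hSmed⟩ := exists_isMaxIndep_median G h₁ h₂ h₃
    refine mem_image.2 ⟨S, mem_maxIndepSets.2 hS, Set.ext fun u => ?_⟩
    obtain ⟨u', hu'⟩ := (hU u u.2).2
    simpa using hSmed u u' hu'
  calc #U + 1 = Fintype.card U + 1 := by rw [Fintype.card_coe]
    _ ≤ #M := card_add_one_le_card_of_isMedianClosed hM hnt hmed hsplit
    _ ≤ #(maxIndepSets G) := card_image_le
    _ = imax G := card_maxIndepSets G

theorem stmt_5_general {V : Type*} [Fintype V] (G : SimpleGraph V) (k : ℕ)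
    (htf : TwinFree G) (himax : imax G = k) :
    Fintype.card V ≤ 2 ^ (k - 1) + k - 1 := by
  classical
  set M := maxIndepSets G
  obtain ⟨S₀, hS₀, -⟩ := exists_isMaxIndep_superset G (s := ∅) (by simp [IsIndep])
  let f : V → Finset (Set V) := fun v => {S ∈ M | v ∈ S}
  have hf : f.Injective := fun u v h => htf.eq_of_forall_isMaxIndep_mem_iff fun S hS => by
    simpa [f, M, mem_maxIndepSets, hS] using Finset.ext_iff.1 h S
  let U : Finset V := {v | S₀ ∉ f v ∧ M \ f v ∈ univ.image f}
  have hU : #U + 1 ≤ k := himax ▸ htf.card_add_one_le_imax hS₀ U fun u hu => by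
    obtain ⟨-, hS₀u, hcompl⟩ := mem_filter.1 hu
    obtain ⟨u', -, hu'⟩ := mem_image.1 hcompl
    refine ⟨fun h => hS₀u (by simp [f, M, mem_maxIndepSets, hS₀, h]), u', fun S hS => ?_⟩
    have : u' ∈ S ↔ u ∉ S := by simpa [f, M, mem_maxIndepSets, hS] using Finset.ext_iff.1 hu' S
    tauto
  calc Fintype.card V = #(univ.image f) := (card_image_of_injective _ hf).symm
    _ ≤ 2 ^ (#M - 1) + #{A ∈ univ.image f | S₀ ∉ A ∧ M \ A ∈ univ.image f} :=
      card_le_two_pow_add_card_filter_sdiff_mem (by simp +contextual [f, subset_iff])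
        (mem_maxIndepSets.2 hS₀)
    _ = 2 ^ (k - 1) + #U := by
      rw [filter_image, card_image_of_injective _ hf, card_maxIndepSets, himax]
    _ ≤ 2 ^ (k - 1) + k - 1 := by omega

theorem stmt_5 {V : Type*} [Fintype V] (G : SimpleGraph V) (k : ℕ) (hk : 2 ≤ k)
    (htf : TwinFree G) (himax : imax G = k) :
    Fintype.card V ≤ 2 ^ (k - 1) + k - 1 :=
  stmt_5_general G k htf himax
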